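/- arXiv:2011.05601 — 3 statements merged into one kernel-verified Lean document; each statement's English description precedes it below -/
import Mathlib

section
/- Let u ∈ R^P be a sparse vector with ||u||_0 ≤ s*, and let Π_s denote the hard thresholding operator which keeps the top-s entries of a vector in absolute value and sets the rest to zero. If s > s*, then for any v ∈ R^P, ||Π_s(v) - u||_2^2 ≤ (1 + 2√(s*)/√(s - s*)) ||v - u||_2^2. -/
/-!
Let `S` be the support of `u`. Thresholding changes the squared error only on the missed support
`A = S \ T`, where `u² - (v - u)² ≤ v² + 2 |v| |v - u|`. Since `|T \ S| ≥ (s - s*) + |A|` and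
every `|v_j|`, `j ∈ T \ S`, dominates every `|v_i|`, `i ∈ A`, each `v_i²` is at most the
`(s - s* + |A|)`-th part `t²` of `∑_{T \ S} v²`. Cauchy–Schwarz on the cross term and AM–GM with
weight `√(|A| / (s - s* + |A|)) ≤ √s* / √(s - s*)` bound the excess by
`2 √s* / √(s - s*) · (∑_A (v - u)² + ∑_{T \ S} v²)`, and these two sums are disjoint parts of
`‖v - u‖²`.
-/

open Finset Real

theorem mul_sq_add_two_mul_mul_le {n k r t σ α β : ℝ} (hn : 0 < n) (hk : 0 ≤ k)
    (hkr : k ≤ r) (hα : 0 ≤ α) (ht : 0 ≤ t) (hσ : σ ≤ √(k * α)) (hβ : (n + k) * t ^ 2 ≤ β) :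
    k * t ^ 2 + 2 * t * σ ≤ 2 * √r / √n * (α + β) := by
  have hnk : 0 < n + k := by linarith
  set c := √k / √(n + k)
  have hc0 : 0 ≤ c := by positivity
  have hck : c * √(n + k) = √k := div_mul_cancel₀ _ (sqrt_pos.mpr hnk).ne'
  have hc1 : c ≤ 1 := div_le_one_of_le₀ (sqrt_le_sqrt (by linarith)) (sqrt_nonneg _)
  have hcr : c ≤ √r / √n :=
    div_le_div₀ (sqrt_nonneg _) (sqrt_le_sqrt hkr) (sqrt_pos.mpr hn) (sqrt_le_sqrt (by linarith))
  have hk_eq : c ^ 2 * (n + k) = k := by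
    rw [← sq_sqrt hnk.le, ← mul_pow, hck, sq_sqrt hk]
  have hsq : k * t ^ 2 ≤ c * β := by
    calc k * t ^ 2 = c ^ 2 * (n + k) * t ^ 2 := by rw [hk_eq]
      _ = c * (c * ((n + k) * t ^ 2)) := by ring
      _ ≤ 1 * (c * β) := by gcongr
      _ = c * β := one_mul _
  -- AM-GM, after writing `√k` as `c * √(n + k)`.
  have hcross : 2 * t * σ ≤ c * (α + β) := by
    calc 2 * t * σ ≤ 2 * t * (√k * √α) := by rw [← sqrt_mul hk]; gcongr
      _ = c * (2 * (√(n + k) * t) * √α) := by rw [← hck]; ring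
      _ ≤ c * ((√(n + k) * t) ^ 2 + √α ^ 2) := by gcongr; exact two_mul_le_add_sq _ _
      _ = c * ((n + k) * t ^ 2 + α) := by rw [mul_pow, sq_sqrt hnk.le, sq_sqrt hα]
      _ ≤ c * (α + β) := by linarith [mul_le_mul_of_nonneg_left hβ hc0]
  have hαβ : 0 ≤ α + β := by nlinarith
  calc k * t ^ 2 + 2 * t * σ ≤ c * β + c * (α + β) := add_le_add hsq hcross
    _ ≤ 2 * c * (α + β) := by nlinarith
    _ ≤ 2 * (√r / √n) * (α + β) := by gcongr
    _ = 2 * √r / √n * (α + β) := by ring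

theorem sq_sub_sq_sub_le_of_abs_le {t u v : ℝ} (hv : |v| ≤ t) :
    u ^ 2 - (v - u) ^ 2 ≤ t ^ 2 + 2 * t * |v - u| := by
  have h : -(|v| * |v - u|) ≤ v * (v - u) := by rw [← abs_mul]; exact neg_abs_le _
  have h2 : |v| * |v - u| ≤ t * |v - u| := by gcongr
  nlinarith [sq_abs v, abs_nonneg v]

variable {ι : Type*}

theorem Finset.sub_add_card_sdiff_le_card_sdiff [DecidableEq ι] {S T : Finset ι} {m : ℕ}
    (hS : #S ≤ m) (hm : m ≤ #T) : #T - m + #(S \ T) ≤ #(T \ S) := by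
  have h₁ := card_sdiff_add_card S T
  have h₂ := card_sdiff_add_card T S
  rw [union_comm] at h₂
  omega

theorem sum_sq_sub_sq_sub_le_of_abs_le_abs (A B : Finset ι) (u v : ι → ℝ) {n r : ℝ} (hn : 0 < n)
    (hAr : (#A : ℝ) ≤ r) (hcard : n + #A ≤ #B) (htop : ∀ i ∈ A, ∀ j ∈ B, |v i| ≤ |v j|) :
    ∑ i ∈ A, (u i ^ 2 - (v i - u i) ^ 2) ≤
      2 * √r / √n * (∑ i ∈ A, (v i - u i) ^ 2 + ∑ j ∈ B, v j ^ 2) := by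
  set β := ∑ j ∈ B, v j ^ 2
  have hnk : 0 < n + #A := by positivity
  set t := √(β / (n + #A))
  have hβt : (n + #A) * t ^ 2 = β := by
    rw [sq_sqrt (div_nonneg (sum_nonneg fun _ _ => sq_nonneg _) hnk.le),
      mul_div_cancel₀ _ hnk.ne']
  have hvt : ∀ i ∈ A, |v i| ≤ t := fun i hi => by
    refine abs_le_sqrt ((le_div_iff₀ hnk).mpr ?_)
    calc v i ^ 2 * (n + #A) ≤ #B • v i ^ 2 := by
          rw [nsmul_eq_mul, mul_comm]; gcongr
      _ ≤ β := card_nsmul_le_sum _ _ _ fun j hj => sq_le_sq.mpr (htop i hi j hj)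
  have hσ : ∑ i ∈ A, |v i - u i| ≤ √(#A * ∑ i ∈ A, (v i - u i) ^ 2) := by
    refine le_sqrt_of_sq_le ?_
    simpa only [sq_abs] using sq_sum_le_card_mul_sum_sq (s := A) (f := fun i => |v i - u i|)
  calc ∑ i ∈ A, (u i ^ 2 - (v i - u i) ^ 2)
      ≤ ∑ i ∈ A, (t ^ 2 + 2 * t * |v i - u i|) :=
        sum_le_sum fun i hi => sq_sub_sq_sub_le_of_abs_le (hvt i hi)
    _ = #A * t ^ 2 + 2 * t * ∑ i ∈ A, |v i - u i| := by
        rw [sum_add_distrib, sum_const, nsmul_eq_mul, mul_sum]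
    _ ≤ _ := mul_sq_add_two_mul_mul_le hn (Nat.cast_nonneg _) hAr
        (sum_nonneg fun _ _ => sq_nonneg _) (sqrt_nonneg _) hσ hβt.le

variable [Fintype ι] [DecidableEq ι]

theorem sum_sq_ite_sub_le (S T : Finset ι) (u v : ι → ℝ) (hu : ∀ i ∉ S, u i = 0) :
    ∑ i, ((if i ∈ T then v i else 0) - u i) ^ 2 ≤
      ∑ i, (v i - u i) ^ 2 + ∑ i ∈ S \ T, (u i ^ 2 - (v i - u i) ^ 2) := by
  rw [← univ_inter (S \ T), ← sum_ite_mem, ← sum_add_distrib]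
  refine sum_le_sum fun i _ => ?_
  by_cases hT : i ∈ T
  · simp [hT]
  by_cases hS : i ∈ S
  · simp [hT, hS]
  · simp [hT, hS, hu i hS, sq_nonneg]

theorem sum_sdiff_sq_add_sum_sdiff_sq_le (S T : Finset ι) (u v : ι → ℝ) (hu : ∀ i ∉ S, u i = 0) :
    ∑ i ∈ S \ T, (v i - u i) ^ 2 + ∑ j ∈ T \ S, v j ^ 2 ≤ ∑ i, (v i - u i) ^ 2 := by
  have hB : ∑ j ∈ T \ S, v j ^ 2 = ∑ j ∈ T \ S, (v j - u j) ^ 2 :=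
    sum_congr rfl fun j hj => by rw [hu j (mem_sdiff.mp hj).2, sub_zero]
  rw [hB, ← sum_union disjoint_sdiff_sdiff]
  exact sum_le_univ_sum_of_nonneg fun _ => sq_nonneg _

/-- Expansion coefficient of the hard thresholding operator.  `T` is the
support of the top-`s` entries of `v` in absolute value, and
`Πₛ(v) = fun i => if i ∈ T then v i else 0`. -/
theorem stmt_1 {P : ℕ} (u v : EuclideanSpace ℝ (Fin P)) (s sstar : ℕ)
    (hsparse : (Finset.univ.filter fun i => u i ≠ 0).card ≤ sstar)
    (hs : sstar < s)
    (T : Finset (Fin P)) (hTcard : T.card = min s P)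
    (hTtop : ∀ i ∈ T, ∀ j ∉ T, |v j| ≤ |v i|) :
    ‖(show EuclideanSpace ℝ (Fin P) from WithLp.toLp 2 (fun i => if i ∈ T then v i else 0)) - u‖ ^ 2 ≤
      (1 + 2 * Real.sqrt sstar / Real.sqrt (s - sstar : ℕ)) * ‖v - u‖ ^ 2 := by
  set S := univ.filter fun i => u i ≠ 0
  have hu : ∀ i ∉ S, u i = 0 := by simp [S]
  rw [EuclideanSpace.real_norm_sq_eq, EuclideanSpace.real_norm_sq_eq]
  simp only [PiLp.sub_apply]
  set n := s - sstar
  suffices hA : ∑ i ∈ S \ T, (u i ^ 2 - (v i - u i) ^ 2) ≤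
      2 * √sstar / √n * ∑ i, (v i - u i) ^ 2 by
    linarith [sum_sq_ite_sub_le S T u v hu]
  rcases (S \ T).eq_empty_or_nonempty with hA | ⟨i, hi⟩
  · rw [hA, sum_empty]; positivity
  have hTs : #T = s := by
    have := card_lt_univ_of_notMem (mem_sdiff.mp hi).2
    rw [Fintype.card_fin] at this
    omega
  have hcard := sub_add_card_sdiff_le_card_sdiff hsparse (hTs ▸ hs.le)
  rw [hTs] at hcard
  have hn : (0 : ℝ) < n := Nat.cast_pos.mpr (by omega)
  calc _ ≤ 2 * √sstar / √n * (∑ i ∈ S \ T, (v i - u i) ^ 2 + ∑ j ∈ T \ S, v j ^ 2) :=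
        sum_sq_sub_sq_sub_le_of_abs_le_abs _ _ _ _ hn
          (by exact_mod_cast (card_le_card sdiff_subset).trans hsparse)
          (by exact_mod_cast hcard)
          fun i hi j hj => hTtop j (mem_sdiff.mp hj).1 i (mem_sdiff.mp hi).2
    _ ≤ _ := by gcongr; exact sum_sdiff_sq_add_sum_sdiff_sq_le S T u v hu
end

section
/- Let V* ∈ R^{P×K} have orthonormal columns, let V, V^+ ∈ R^{P×K}, and let R = argmin_{Y ∈ O(K)} ||V - V* Y||_F and R^+ = argmin_{Y ∈ O(K)} ||V^+ - V* Y||_F. Then ||R^+ - R||_F ≤ 2||V^+ - V* R||_F. -/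
open Matrix

/-- Frobenius norm of a real matrix. -/
noncomputable def frobNorm {m n : ℕ} (A : Matrix (Fin m) (Fin n) ℝ) : ℝ :=
  Real.sqrt (∑ i, ∑ j, (A i j) ^ 2)

/-!
Left multiplication by `V*` is an isometry for the Frobenius norm, so
`‖R⁺ - R‖ = ‖V* R⁺ - V* R‖ ≤ ‖V⁺ - V* R⁺‖ + ‖V⁺ - V* R‖`, and the minimality of `R⁺`
(tested against the orthogonal matrix `R`) bounds the first term by the second.
-/

attribute [local instance] Matrix.frobeniusNormedAddCommGroup

namespace Matrix

variable {m n k : Type*} [Fintype m] [Fintype n] [Fintype k]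

theorem frobenius_norm_sq_eq_trace (A : Matrix m n ℝ) : ‖A‖ ^ 2 = (Aᵀ * A).trace := by
  rw [frobenius_norm_def, ← Real.sqrt_eq_rpow, Real.sq_sqrt (by positivity), trace,
    Finset.sum_comm]
  refine Finset.sum_congr rfl fun j _ => ?_
  simp [mul_apply, sq]

theorem frobenius_norm_mul_of_transpose_mul_self_eq_one [DecidableEq n] {U : Matrix m n ℝ}
    (hU : Uᵀ * U = 1) (A : Matrix n k ℝ) : ‖U * A‖ = ‖A‖ := by
  have hsq : ‖U * A‖ ^ 2 = ‖A‖ ^ 2 := by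
    rw [frobenius_norm_sq_eq_trace, frobenius_norm_sq_eq_trace, transpose_mul, Matrix.mul_assoc,
      ← Matrix.mul_assoc Uᵀ, hU, Matrix.one_mul]
  exact (pow_left_inj₀ (norm_nonneg _) (norm_nonneg _) two_ne_zero).mp hsq

end Matrix

theorem frobNorm_eq_norm {m n : ℕ} (A : Matrix (Fin m) (Fin n) ℝ) : frobNorm A = ‖A‖ := by
  rw [frobNorm, frobenius_norm_def, ← Real.sqrt_eq_rpow]
  simp

theorem stmt_4_general {P K : ℕ} (Vstar Vplus : Matrix (Fin P) (Fin K) ℝ)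
    (hVstar : Vstarᵀ * Vstar = 1)
    (R Rplus : Matrix (Fin K) (Fin K) ℝ)
    (hR : Rᵀ * R = 1)
    (hRplusmin : ∀ Y : Matrix (Fin K) (Fin K) ℝ, Yᵀ * Y = 1 →
      frobNorm (Vplus - Vstar * Rplus) ≤ frobNorm (Vplus - Vstar * Y)) :
    frobNorm (Rplus - R) ≤ 2 * frobNorm (Vplus - Vstar * R) := by
  have hRplus_le : ‖Vplus - Vstar * Rplus‖ ≤ ‖Vplus - Vstar * R‖ := by
    simpa only [frobNorm_eq_norm] using hRplusmin R hR
  rw [frobNorm_eq_norm, frobNorm_eq_norm]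
  calc ‖Rplus - R‖ = ‖Vstar * Rplus - Vstar * R‖ := by
        rw [← Matrix.mul_sub, frobenius_norm_mul_of_transpose_mul_self_eq_one hVstar]
    _ ≤ ‖Vstar * Rplus - Vplus‖ + ‖Vplus - Vstar * R‖ := norm_sub_le_norm_sub_add_norm_sub _ _ _
    _ = ‖Vplus - Vstar * Rplus‖ + ‖Vplus - Vstar * R‖ := by rw [norm_sub_rev (Vstar * Rplus)]
    _ ≤ 2 * ‖Vplus - Vstar * R‖ := by linarith

theorem stmt_4 {P K : ℕ} (Vstar V Vplus : Matrix (Fin P) (Fin K) ℝ)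
    (hVstar : Vstarᵀ * Vstar = 1)
    (R Rplus : Matrix (Fin K) (Fin K) ℝ)
    (hR : Rᵀ * R = 1) (hRplus : Rplusᵀ * Rplus = 1)
    (hRmin : ∀ Y : Matrix (Fin K) (Fin K) ℝ, Yᵀ * Y = 1 →
      frobNorm (V - Vstar * R) ≤ frobNorm (V - Vstar * Y))
    (hRplusmin : ∀ Y : Matrix (Fin K) (Fin K) ℝ, Yᵀ * Y = 1 →
      frobNorm (Vplus - Vstar * Rplus) ≤ frobNorm (Vplus - Vstar * Y)) :
    frobNorm (Rplus - R) ≤ 2 * frobNorm (Vplus - Vstar * R) :=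
  stmt_4_general Vstar Vplus hVstar R Rplus hR hRplusmin
end

section
/- Let Σ = V diag(a) V^T and Σ̃* = V* diag(ã*) V*^T where V, V* ∈ R^{P×K} have orthonormal columns (so ||V||_2 = ||V*||_2 = 1), a, ã* ∈ R^K, and let R ∈ O(K) be any rotation matrix. Then ||diag(a) - R^T diag(ã*) R||_F ≤ ||Σ - Σ̃*||_F + 2||diag(a)||_2 ||V - V* R||_F. -/
open Matrix

/-- Spectral norm (ℓ₂ operator norm) of a real matrix. -/
noncomputable def specNorm {m n : ℕ} (A : Matrix (Fin m) (Fin n) ℝ) : ℝ :=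
  ‖LinearMap.toContinuousLinearMap (Matrix.toEuclideanLin A)‖

namespace FrobAux

lemma sq_sum_eq_trace {m n : ℕ} (A : Matrix (Fin m) (Fin n) ℝ) :
    (∑ i, ∑ j, (A i j) ^ 2) = Matrix.trace (A * Aᵀ) := by
  simp [Matrix.trace, Matrix.mul_apply, Matrix.diag, sq]

lemma frobNorm_eq_trace {m n : ℕ} (A : Matrix (Fin m) (Fin n) ℝ) :
    frobNorm A = Real.sqrt (Matrix.trace (A * Aᵀ)) := by
  rw [frobNorm, sq_sum_eq_trace]

lemma frobNorm_nonneg {m n : ℕ} (A : Matrix (Fin m) (Fin n) ℝ) : 0 ≤ frobNorm A :=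
  Real.sqrt_nonneg _

lemma frobNorm_transpose {m n : ℕ} (A : Matrix (Fin m) (Fin n) ℝ) :
    frobNorm Aᵀ = frobNorm A := by
  rw [frobNorm, frobNorm, Finset.sum_comm]
  simp [Matrix.transpose_apply]

lemma frobNorm_neg {m n : ℕ} (A : Matrix (Fin m) (Fin n) ℝ) :
    frobNorm (-A) = frobNorm A := by
  simp [frobNorm]

lemma frobNorm_mul_orth_right {m k p : ℕ} (X : Matrix (Fin m) (Fin k) ℝ)
    (W : Matrix (Fin p) (Fin k) ℝ) (hW : Wᵀ * W = 1) :
    frobNorm (X * Wᵀ) = frobNorm X := by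
  rw [frobNorm_eq_trace, frobNorm_eq_trace, Matrix.transpose_mul, Matrix.transpose_transpose]
  congr 1
  rw [Matrix.mul_assoc, ← Matrix.mul_assoc Wᵀ W Xᵀ, hW, Matrix.one_mul]

lemma frobNorm_mul_orth_left {m k p : ℕ} (X : Matrix (Fin k) (Fin m) ℝ)
    (W : Matrix (Fin p) (Fin k) ℝ) (hW : Wᵀ * W = 1) :
    frobNorm (W * X) = frobNorm X := by
  rw [frobNorm_eq_trace, frobNorm_eq_trace, Matrix.transpose_mul]
  congr 1
  rw [Matrix.trace_mul_comm, Matrix.mul_assoc, ← Matrix.mul_assoc Wᵀ W X, hW, Matrix.one_mul,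
    Matrix.trace_mul_comm]

/-- View a matrix as a point of Euclidean space on the product index. -/
noncomputable def toEuc {m n : ℕ} (A : Matrix (Fin m) (Fin n) ℝ) :
    EuclideanSpace ℝ (Fin m × Fin n) :=
  (WithLp.equiv 2 _).symm (fun p => A p.1 p.2)

lemma frobNorm_eq_norm {m n : ℕ} (A : Matrix (Fin m) (Fin n) ℝ) :
    frobNorm A = ‖toEuc A‖ := by
  rw [EuclideanSpace.norm_eq, frobNorm]
  congr 1
  rw [Fintype.sum_prod_type]
  exact Finset.sum_congr rfl fun i _ => Finset.sum_congr rfl fun j _ => by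
    simp [toEuc, Real.norm_eq_abs, sq_abs]

lemma frobNorm_add_le {m n : ℕ} (A B : Matrix (Fin m) (Fin n) ℝ) :
    frobNorm (A + B) ≤ frobNorm A + frobNorm B := by
  rw [frobNorm_eq_norm, frobNorm_eq_norm, frobNorm_eq_norm]
  have : toEuc (A + B) = toEuc A + toEuc B := by
    ext p; simp [toEuc]
  rw [this]
  exact norm_add_le _ _

lemma frobNorm_mul_le_spec {m n : ℕ} (D : Matrix (Fin m) (Fin m) ℝ)
    (A : Matrix (Fin m) (Fin n) ℝ) :
    frobNorm (D * A) ≤ specNorm D * frobNorm A := by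
  have hs : 0 ≤ specNorm D := norm_nonneg _
  have key : (∑ i, ∑ j, ((D * A) i j) ^ 2) ≤ specNorm D ^ 2 * ∑ i, ∑ j, (A i j) ^ 2 := by
    rw [Finset.sum_comm, Finset.sum_comm (s := Finset.univ) (f := fun i j => (A i j) ^ 2),
      Finset.mul_sum]
    apply Finset.sum_le_sum
    intro j _
    set x : EuclideanSpace ℝ (Fin m) := (WithLp.equiv 2 _).symm (fun i => A i j) with hx
    have hDx : ∀ i, (D * A) i j = (Matrix.toEuclideanLin D x) i := by
      intro i
      simp [hx, Matrix.toEuclideanLin_apply, Matrix.mulVec, Matrix.mul_apply, dotProduct]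
    have hnx : ‖x‖ ^ 2 = ∑ i, (A i j) ^ 2 := by
      rw [EuclideanSpace.norm_eq, Real.sq_sqrt (by positivity)]
      simp [hx, sq_abs]
    have hDxn : ‖Matrix.toEuclideanLin D x‖ ^ 2 = ∑ i, ((D * A) i j) ^ 2 := by
      rw [EuclideanSpace.norm_eq, Real.sq_sqrt (by positivity)]
      apply Finset.sum_congr rfl
      intro i _
      rw [hDx i, Real.norm_eq_abs, sq_abs]
    have hle : ‖Matrix.toEuclideanLin D x‖ ≤ specNorm D * ‖x‖ :=
      (LinearMap.toContinuousLinearMap (Matrix.toEuclideanLin D)).le_opNorm x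
    calc ∑ i, ((D * A) i j) ^ 2 = ‖Matrix.toEuclideanLin D x‖ ^ 2 := hDxn.symm
      _ ≤ (specNorm D * ‖x‖) ^ 2 := by
          apply pow_le_pow_left₀ (norm_nonneg _) hle
      _ = specNorm D ^ 2 * ‖x‖ ^ 2 := by ring
      _ = specNorm D ^ 2 * ∑ i, (A i j) ^ 2 := by rw [hnx]
  calc frobNorm (D * A) = Real.sqrt (∑ i, ∑ j, ((D * A) i j) ^ 2) := rfl
    _ ≤ Real.sqrt (specNorm D ^ 2 * ∑ i, ∑ j, (A i j) ^ 2) := Real.sqrt_le_sqrt key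
    _ = specNorm D * frobNorm A := by
        rw [Real.sqrt_mul (by positivity), Real.sqrt_sq hs, frobNorm]

end FrobAux

open FrobAux in
theorem stmt_6 {P K : ℕ} (V Vstar : Matrix (Fin P) (Fin K) ℝ)
    (hV : Vᵀ * V = 1) (hVstar : Vstarᵀ * Vstar = 1)
    (a atil : Fin K → ℝ)
    (R : Matrix (Fin K) (Fin K) ℝ) (hR : Rᵀ * R = 1) :
    frobNorm (Matrix.diagonal a - Rᵀ * Matrix.diagonal atil * R) ≤
      frobNorm (V * Matrix.diagonal a * Vᵀ - Vstar * Matrix.diagonal atil * Vstarᵀ) +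
        2 * specNorm (Matrix.diagonal a) * frobNorm (V - Vstar * R) := by
  set D := Matrix.diagonal a with hD
  set E := Matrix.diagonal atil with hE
  set W := Vstar * R with hWdef
  have hRR : R * Rᵀ = 1 := mul_eq_one_comm.mp hR
  have hW : Wᵀ * W = 1 := by
    rw [hWdef, Matrix.transpose_mul, Matrix.mul_assoc, ← Matrix.mul_assoc Vstarᵀ Vstar R,
      hVstar, Matrix.one_mul, hR]
  have key : W * (D - Rᵀ * E * R) * Wᵀ =
      (V * D * Vᵀ - Vstar * E * Vstarᵀ) + (-((V - W) * D * Vᵀ)) + (-(W * D * (V - W)ᵀ)) := by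
    have hWE : W * (Rᵀ * E * R) * Wᵀ = Vstar * E * Vstarᵀ := by
      rw [hWdef, Matrix.transpose_mul]
      simp only [Matrix.mul_assoc]
      rw [← Matrix.mul_assoc R Rᵀ, hRR, Matrix.one_mul, ← Matrix.mul_assoc R Rᵀ, hRR,
        Matrix.one_mul]
    have hsplit : W * (D - Rᵀ * E * R) * Wᵀ = W * D * Wᵀ - W * (Rᵀ * E * R) * Wᵀ := by
      rw [Matrix.mul_sub, Matrix.sub_mul]
    have hexp : (V - W) * D * Vᵀ = V * D * Vᵀ - W * D * Vᵀ := by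
      rw [Matrix.sub_mul, Matrix.sub_mul]
    have hexp2 : W * D * (V - W)ᵀ = W * D * Vᵀ - W * D * Wᵀ := by
      rw [Matrix.transpose_sub, Matrix.mul_sub]
    rw [hsplit, hWE, hexp, hexp2]
    abel
  have h1 : frobNorm (D - Rᵀ * E * R) = frobNorm (W * (D - Rᵀ * E * R) * Wᵀ) := by
    rw [Matrix.mul_assoc W (D - Rᵀ * E * R) Wᵀ, frobNorm_mul_orth_left ((D - Rᵀ * E * R) * Wᵀ) W hW,
      frobNorm_mul_orth_right (D - Rᵀ * E * R) W hW]
  have h2 : frobNorm ((V - W) * D * Vᵀ) ≤ specNorm D * frobNorm (V - W) := by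
    calc frobNorm ((V - W) * D * Vᵀ) = frobNorm ((V - W) * D) :=
          frobNorm_mul_orth_right ((V - W) * D) V hV
      _ = frobNorm (Dᵀ * (V - W)ᵀ) := by
          rw [← frobNorm_transpose ((V - W) * D), Matrix.transpose_mul]
      _ = frobNorm (D * (V - W)ᵀ) := by rw [hD, Matrix.diagonal_transpose]
      _ ≤ specNorm D * frobNorm (V - W)ᵀ := frobNorm_mul_le_spec _ _
      _ = specNorm D * frobNorm (V - W) := by rw [frobNorm_transpose]
  have h3 : frobNorm (W * D * (V - W)ᵀ) ≤ specNorm D * frobNorm (V - W) := by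
    calc frobNorm (W * D * (V - W)ᵀ) = frobNorm (W * (D * (V - W)ᵀ)) := by
          rw [Matrix.mul_assoc]
      _ = frobNorm (D * (V - W)ᵀ) := frobNorm_mul_orth_left _ W hW
      _ ≤ specNorm D * frobNorm (V - W)ᵀ := frobNorm_mul_le_spec _ _
      _ = specNorm D * frobNorm (V - W) := by rw [frobNorm_transpose]
  calc frobNorm (D - Rᵀ * E * R) = frobNorm (W * (D - Rᵀ * E * R) * Wᵀ) := h1
    _ = frobNorm ((V * D * Vᵀ - Vstar * E * Vstarᵀ) + (-((V - W) * D * Vᵀ))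
          + (-(W * D * (V - W)ᵀ))) := by rw [key]
    _ ≤ frobNorm ((V * D * Vᵀ - Vstar * E * Vstarᵀ) + (-((V - W) * D * Vᵀ)))
          + frobNorm (-(W * D * (V - W)ᵀ)) := frobNorm_add_le _ _
    _ ≤ frobNorm (V * D * Vᵀ - Vstar * E * Vstarᵀ) + frobNorm (-((V - W) * D * Vᵀ))
          + frobNorm (-(W * D * (V - W)ᵀ)) := by
          gcongr ?_ + _; exact frobNorm_add_le _ _
    _ = frobNorm (V * D * Vᵀ - Vstar * E * Vstarᵀ) + frobNorm ((V - W) * D * Vᵀ)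
          + frobNorm (W * D * (V - W)ᵀ) := by rw [frobNorm_neg, frobNorm_neg]
    _ ≤ frobNorm (V * D * Vᵀ - Vstar * E * Vstarᵀ) + specNorm D * frobNorm (V - W)
          + specNorm D * frobNorm (V - W) := by gcongr
    _ = frobNorm (V * D * Vᵀ - Vstar * E * Vstarᵀ) + 2 * specNorm D * frobNorm (V - W) := by
          ring
end
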